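/- Let G and H be short dicotic games. If G + H = 0 (mod D⁻), then H = −G (mod D⁻). -/

import Mathlib

universe u

namespace SetTheory

/-- Pre-games, as in Mathlib (December 2024); removed from Mathlib since. -/
inductive PGame : Type (u + 1)
  | mk : ∀ α β : Type u, (α → PGame) → (β → PGame) → PGame

namespace PGame

def LeftMoves : PGame → Type u
  | mk l _ _ _ => l

def RightMoves : PGame → Type u
  | mk _ r _ _ => r

def moveLeft : ∀ g : PGame, LeftMoves g → PGame
  | mk _l _ L _ => L

def moveRight : ∀ g : PGame, RightMoves g → PGame
  | mk _ _r _ R => R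

inductive IsOption : PGame → PGame → Prop
  | moveLeft {x : PGame} (i : x.LeftMoves) : IsOption (x.moveLeft i) x
  | moveRight {x : PGame} (i : x.RightMoves) : IsOption (x.moveRight i) x

instance : Zero PGame :=
  ⟨⟨PEmpty, PEmpty, PEmpty.elim, PEmpty.elim⟩⟩

def star : PGame.{u} :=
  ⟨PUnit, PUnit, fun _ => 0, fun _ => 0⟩

def Identical : PGame.{u} → PGame.{u} → Prop
  | mk _ _ xL xR, mk _ _ yL yR =>
    Relator.BiTotal (fun i j ↦ Identical (xL i) (yL j)) ∧
      Relator.BiTotal (fun i j ↦ Identical (xR i) (yR j))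

def neg : PGame → PGame
  | ⟨l, r, L, R⟩ => ⟨r, l, fun i => neg (R i), fun i => neg (L i)⟩

instance : Neg PGame :=
  ⟨neg⟩

noncomputable instance : Add PGame.{u} :=
  ⟨fun x y => by
    induction x generalizing y with | mk xl xr _ _ IHxl IHxr => _
    induction y with | mk yl yr yL yR IHyl IHyr => _
    have y := mk yl yr yL yR
    refine ⟨xl ⊕ yl, xr ⊕ yr, Sum.rec ?_ ?_, Sum.rec ?_ ?_⟩
    · exact fun i => IHxl i y
    · exact IHyl
    · exact fun i => IHxr i y
    · exact IHyr⟩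

noncomputable def birthday : PGame.{u} → Ordinal.{u}
  | ⟨_, _, xL, xR⟩ =>
    max (Ordinal.lsub.{u, u} fun i => birthday (xL i)) (Ordinal.lsub.{u, u} fun i => birthday (xR i))

theorem birthday_moveLeft_lt {x : PGame} (i : x.LeftMoves) : (x.moveLeft i).birthday < x.birthday := by
  cases x; rw [birthday]; exact lt_max_of_lt_left (Ordinal.lt_lsub _ i)

theorem birthday_moveRight_lt {x : PGame} (i : x.RightMoves) : (x.moveRight i).birthday < x.birthday := by
  cases x; rw [birthday]; exact lt_max_of_lt_right (Ordinal.lt_lsub _ i)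

end PGame

end SetTheory

open SetTheory PGame

namespace MisereDicot

def Follower (G' G : PGame) : Prop := Relation.ReflTransGen PGame.IsOption G' G

def IsShort (G : PGame) : Prop :=
  ∀ G', Follower G' G → Finite G'.LeftMoves ∧ Finite G'.RightMoves

def Dicot (G : PGame) : Prop :=
  ∀ G', Follower G' G → (IsEmpty G'.LeftMoves ↔ IsEmpty G'.RightMoves)

mutual
def LeftWinsFirst (G : PGame) : Prop :=
  IsEmpty G.LeftMoves ∨ ∃ i, ¬ RightWinsFirst (G.moveLeft i)
termination_by G.birthday
decreasing_by exact PGame.birthday_moveLeft_lt i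

def RightWinsFirst (G : PGame) : Prop :=
  IsEmpty G.RightMoves ∨ ∃ j, ¬ LeftWinsFirst (G.moveRight j)
termination_by G.birthday
decreasing_by exact PGame.birthday_moveRight_lt j
end

inductive MOutcome : Type
  | L | N | P | R
deriving DecidableEq

instance : LE MOutcome := ⟨fun a b => a = b ∨ a = .R ∨ b = .L⟩

noncomputable def outcome (G : PGame) : MOutcome := by
  classical
  exact if LeftWinsFirst G then (if RightWinsFirst G then .N else .L)
        else (if RightWinsFirst G then .R else .P)

def Dge (G H : PGame) : Prop :=
  ∀ X : PGame, IsShort X → Dicot X → outcome (H + X) ≤ outcome (G + X)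

def Deq (G H : PGame) : Prop :=
  ∀ X : PGame, IsShort X → Dicot X → outcome (G + X) = outcome (H + X)

def Dgt (G H : PGame) : Prop := Dge G H ∧ ¬ Deq G H

def DInvertible (G : PGame) : Prop :=
  ∃ H : PGame, IsShort H ∧ Dicot H ∧ Deq (G + H) 0

/-- The left option `G^L_i` is reversible through its right option `(G^L_i)^R_j ≼ G`. -/
def LeftReversibleAt (G : PGame) (i : G.LeftMoves) (j : (G.moveLeft i).RightMoves) : Prop :=
  Dge G ((G.moveLeft i).moveRight j)

def RightReversibleAt (G : PGame) (j : G.RightMoves) (i : (G.moveRight j).LeftMoves) : Prop :=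
  Dge ((G.moveRight j).moveLeft i) G

/-- `G` has a dominated left option (removable by the Domination theorem). -/
def LeftDominated (G : PGame) : Prop :=
  ∃ i i' : G.LeftMoves, ¬ (G.moveLeft i).Identical (G.moveLeft i') ∧
    Dge (G.moveLeft i') (G.moveLeft i)

def RightDominated (G : PGame) : Prop :=
  ∃ j j' : G.RightMoves, ¬ (G.moveRight j).Identical (G.moveRight j') ∧
    Dge (G.moveRight j) (G.moveRight j')

/-- `G` has a non-atomic reversible left option (bypassable). -/
def LeftNonAtomicReversible (G : PGame) : Prop :=
  ∃ i j, LeftReversibleAt G i j ∧ Nonempty ((G.moveLeft i).moveRight j).LeftMoves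

def RightNonAtomicReversible (G : PGame) : Prop :=
  ∃ j i, RightReversibleAt G j i ∧ Nonempty ((G.moveRight j).moveLeft i).RightMoves

/-- `G` has an atomic-reversible left option to which the atomic-reversibility
replacement applies nontrivially (i.e. changing the set of options): either some
other left option is a winning first move for Left (so the option is removable),
or the option is not already `*`. -/
def LeftAtomicReducible (G : PGame) : Prop :=
  ∃ i j, LeftReversibleAt G i j ∧ IsEmpty ((G.moveLeft i).moveRight j).LeftMoves ∧
    ((∃ i', ¬ (G.moveLeft i').Identical (G.moveLeft i) ∧ ¬ RightWinsFirst (G.moveLeft i')) ∨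
      ¬ (G.moveLeft i).Identical star)

def RightAtomicReducible (G : PGame) : Prop :=
  ∃ j i, RightReversibleAt G j i ∧ IsEmpty ((G.moveRight j).moveLeft i).RightMoves ∧
    ((∃ j', ¬ (G.moveRight j').Identical (G.moveRight j) ∧ ¬ LeftWinsFirst (G.moveRight j')) ∨
      ¬ (G.moveRight j).Identical star)

/-- The Substitution theorem applies to `G`: `G = {A | C}` with `A` an
atomic-reversible left option and `C` an atomic-reversible right option. -/
def SubstitutionReducible (G : PGame) : Prop :=
  (∀ i i' : G.LeftMoves, (G.moveLeft i).Identical (G.moveLeft i')) ∧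
  (∀ j j' : G.RightMoves, (G.moveRight j).Identical (G.moveRight j')) ∧
  (∃ i j, LeftReversibleAt G i j ∧ IsEmpty ((G.moveLeft i).moveRight j).LeftMoves) ∧
  (∃ j i, RightReversibleAt G j i ∧ IsEmpty ((G.moveRight j).moveLeft i).RightMoves)

/-- `G` is in canonical form: no follower admits any of the misère-dicot
simplifications (domination, non-atomic reversibility, atomic reversibility,
substitution) producing an equivalent game with a different set of options. -/
def CanonicalForm (G : PGame) : Prop :=
  ∀ G', Follower G' G →
    ¬ (LeftDominated G' ∨ RightDominated G' ∨
       LeftNonAtomicReversible G' ∨ RightNonAtomicReversible G' ∨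
       LeftAtomicReducible G' ∨ RightAtomicReducible G' ∨
       SubstitutionReducible G')

/-- The game `*2 = {0, * | 0, *}`. -/
def star2 : PGame :=
  PGame.mk Bool Bool (fun b => cond b star 0) (fun b => cond b star 0)

open Classical in
/-- The adjoint `G°` of `G`. -/
noncomputable def adjoint : PGame → PGame
  | PGame.mk l r L R =>
    if IsEmpty l ∧ IsEmpty r then star
    else if IsEmpty l then PGame.mk r PUnit (fun j => adjoint (R j)) (fun _ => 0)
    else if IsEmpty r then PGame.mk PUnit l (fun _ => 0) (fun i => adjoint (L i))
    else PGame.mk r l (fun j => adjoint (R j)) (fun i => adjoint (L i))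

/-- A universe of short games: a class closed under taking options, disjunctive
sums and conjugates. -/
structure GameUniverse where
  mem : PGame → Prop
  short_mem : ∀ G, mem G → IsShort G
  isOption_mem : ∀ G G', mem G → PGame.IsOption G' G → mem G'
  add_mem : ∀ G H, mem G → mem H → mem (G + H)
  neg_mem : ∀ G, mem G → mem (-G)

/-- `G ≽ H` modulo the universe `U`. -/
def UGe (U : GameUniverse) (G H : PGame) : Prop :=
  ∀ X : PGame, U.mem X → outcome (H + X) ≤ outcome (G + X)

/-- `G = H` modulo the universe `U`. -/
def UEq (U : GameUniverse) (G H : PGame) : Prop :=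
  ∀ X : PGame, U.mem X → outcome (G + X) = outcome (H + X)

/-- `G ≻ H` modulo the universe `U`. -/
def UGt (U : GameUniverse) (G H : PGame) : Prop := UGe U G H ∧ ¬ UEq U G H

/-- `J` is invertible in the universe `U`. -/
def UInvertible (U : GameUniverse) (J : PGame) : Prop :=
  ∃ J' : PGame, U.mem J' ∧ UEq U (J + J') 0

end MisereDicot

/-!
From `G + H = 0` we get `G + H ≼ 0` and, by conjugation, `-G + -H ≼ 0` (modulo dicots). It
therefore suffices to show that `A + B ≼ 0` implies `B ≼ -A`; antisymmetry then gives `H = -G`.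

For short dicots, `W ≼ 0` implies the recursive condition `RecLeZero W`: Right wins `W` moving
first, and every Left option `W^L` has a Right option `W^{LR}` satisfying the condition again.
If some `W^L` has no such reply, a test game that `W` fails is assembled from adjoints `G°`, for
which `G + G°` is a second-player win. Given `RecLeZero (A + B)`, Left plays `-A + X` by copying
her play in `B + X`; a move with no counterpart is answered through the reversal that
`RecLeZero (A + B)` supplies. Induction on the birthdays of `A`, `B`, `X` makes this precise.
-/

namespace SetTheory.PGame

variable {p : PGame → Prop} {G H : PGame}

theorem neg_mk {l r : Type u} (L : l → PGame) (R : r → PGame) :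
    -mk l r L R = mk r l (fun j => -R j) (fun i => -L i) :=
  rfl

instance : InvolutiveNeg PGame where
  neg_neg G := by
    induction G with
    | mk l r L R ihL ihR => simp only [neg_mk, ihL, ihR]

protected theorem neg_zero : -(0 : PGame) = 0 := by
  show mk _ _ _ _ = mk _ _ _ _
  congr <;> funext i <;> exact i.elim

protected theorem neg_add (G H : PGame) : -(G + H) = -G + -H := by
  induction G generalizing H with
  | mk l r L R ihL ihR =>
    induction H with
    | mk l' r' L' R' ihL' ihR' =>
      show mk _ _ _ _ = mk _ _ _ _
      congr <;> funext i <;> rcases i with i | i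
      exacts [ihR i _, ihR' i, ihL i _, ihL' i]

theorem birthday_moveRight_moveLeft_lt {G : PGame} (i : G.LeftMoves)
    (j : (G.moveLeft i).RightMoves) : ((G.moveLeft i).moveRight j).birthday < G.birthday :=
  (birthday_moveRight_lt j).trans (birthday_moveLeft_lt i)

instance : IsEmpty (LeftMoves 0) := inferInstanceAs (IsEmpty PEmpty)

instance : IsEmpty (RightMoves 0) := inferInstanceAs (IsEmpty PEmpty)

theorem isEmpty_leftMoves_add :
    IsEmpty (G + H).LeftMoves ↔ IsEmpty G.LeftMoves ∧ IsEmpty H.LeftMoves := by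
  cases G; cases H; exact isEmpty_sum

theorem isEmpty_rightMoves_add :
    IsEmpty (G + H).RightMoves ↔ IsEmpty G.RightMoves ∧ IsEmpty H.RightMoves := by
  cases G; cases H; exact isEmpty_sum

theorem exists_leftMoves_add :
    (∃ i, p ((G + H).moveLeft i)) ↔ (∃ i, p (G.moveLeft i + H)) ∨ ∃ i, p (G + H.moveLeft i) := by
  cases G; cases H; exact Sum.exists

theorem exists_rightMoves_add : (∃ j, p ((G + H).moveRight j)) ↔
    (∃ j, p (G.moveRight j + H)) ∨ ∃ j, p (G + H.moveRight j) := by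
  cases G; cases H; exact Sum.exists

theorem forall_leftMoves_add :
    (∀ i, p ((G + H).moveLeft i)) ↔ (∀ i, p (G.moveLeft i + H)) ∧ ∀ i, p (G + H.moveLeft i) := by
  cases G; cases H; exact Sum.forall

theorem forall_rightMoves_add : (∀ j, p ((G + H).moveRight j)) ↔
    (∀ j, p (G.moveRight j + H)) ∧ ∀ j, p (G + H.moveRight j) := by
  cases G; cases H; exact Sum.forall

theorem isEmpty_leftMoves_neg : IsEmpty (-G).LeftMoves ↔ IsEmpty G.RightMoves := by
  cases G; rfl

theorem isEmpty_rightMoves_neg : IsEmpty (-G).RightMoves ↔ IsEmpty G.LeftMoves := by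
  cases G; rfl

theorem exists_leftMoves_neg : (∃ i, p ((-G).moveLeft i)) ↔ ∃ j, p (-G.moveRight j) := by
  cases G; rfl

theorem forall_rightMoves_neg : (∀ j, p ((-G).moveRight j)) ↔ ∀ i, p (-G.moveLeft i) := by
  cases G; rfl

end SetTheory.PGame

namespace MisereDicot

variable {P : PGame → Prop} {A B G H W X : PGame}

theorem leftWinsFirst_iff :
    LeftWinsFirst G ↔ IsEmpty G.LeftMoves ∨ ∃ i, ¬ RightWinsFirst (G.moveLeft i) := by
  rw [LeftWinsFirst]

theorem rightWinsFirst_iff :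
    RightWinsFirst G ↔ IsEmpty G.RightMoves ∨ ∃ j, ¬ LeftWinsFirst (G.moveRight j) := by
  rw [RightWinsFirst]

theorem not_leftWinsFirst_iff :
    ¬ LeftWinsFirst G ↔ Nonempty G.LeftMoves ∧ ∀ i, RightWinsFirst (G.moveLeft i) := by
  simp [leftWinsFirst_iff]

theorem not_rightWinsFirst_iff :
    ¬ RightWinsFirst G ↔ Nonempty G.RightMoves ∧ ∀ j, LeftWinsFirst (G.moveRight j) := by
  simp [rightWinsFirst_iff]

theorem leftWinsFirst_of_isEmpty (h : IsEmpty G.LeftMoves) : LeftWinsFirst G :=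
  leftWinsFirst_iff.mpr (.inl h)

theorem rightWinsFirst_of_isEmpty (h : IsEmpty G.RightMoves) : RightWinsFirst G :=
  rightWinsFirst_iff.mpr (.inl h)

theorem leftWinsFirst_add_iff :
    LeftWinsFirst (G + H) ↔ IsEmpty G.LeftMoves ∧ IsEmpty H.LeftMoves ∨
      (∃ i, ¬ RightWinsFirst (G.moveLeft i + H)) ∨ ∃ i, ¬ RightWinsFirst (G + H.moveLeft i) := by
  rw [leftWinsFirst_iff, isEmpty_leftMoves_add, exists_leftMoves_add (p := (¬ RightWinsFirst ·))]

theorem rightWinsFirst_add_iff :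
    RightWinsFirst (G + H) ↔ IsEmpty G.RightMoves ∧ IsEmpty H.RightMoves ∨
      (∃ j, ¬ LeftWinsFirst (G.moveRight j + H)) ∨ ∃ j, ¬ LeftWinsFirst (G + H.moveRight j) := by
  rw [rightWinsFirst_iff, isEmpty_rightMoves_add,
    exists_rightMoves_add (p := (¬ LeftWinsFirst ·))]

theorem not_leftWinsFirst_add_iff :
    ¬ LeftWinsFirst (G + H) ↔ (Nonempty G.LeftMoves ∨ Nonempty H.LeftMoves) ∧
      (∀ i, RightWinsFirst (G.moveLeft i + H)) ∧ ∀ i, RightWinsFirst (G + H.moveLeft i) := by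
  rw [not_leftWinsFirst_iff, ← not_isEmpty_iff, isEmpty_leftMoves_add,
    forall_leftMoves_add (p := RightWinsFirst)]
  simp only [not_and_or, not_isEmpty_iff]

theorem not_rightWinsFirst_add_iff :
    ¬ RightWinsFirst (G + H) ↔ (Nonempty G.RightMoves ∨ Nonempty H.RightMoves) ∧
      (∀ j, LeftWinsFirst (G.moveRight j + H)) ∧ ∀ j, LeftWinsFirst (G + H.moveRight j) := by
  rw [not_rightWinsFirst_iff, ← not_isEmpty_iff, isEmpty_rightMoves_add,
    forall_rightMoves_add (p := LeftWinsFirst)]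
  simp only [not_and_or, not_isEmpty_iff]

theorem leftWinsFirst_add_left (i : G.LeftMoves) (h : ¬ RightWinsFirst (G.moveLeft i + H)) :
    LeftWinsFirst (G + H) :=
  leftWinsFirst_add_iff.mpr (.inr (.inl ⟨i, h⟩))

theorem leftWinsFirst_add_right (i : H.LeftMoves) (h : ¬ RightWinsFirst (G + H.moveLeft i)) :
    LeftWinsFirst (G + H) :=
  leftWinsFirst_add_iff.mpr (.inr (.inr ⟨i, h⟩))

theorem rightWinsFirst_add_left (j : G.RightMoves) (h : ¬ LeftWinsFirst (G.moveRight j + H)) :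
    RightWinsFirst (G + H) :=
  rightWinsFirst_add_iff.mpr (.inr (.inl ⟨j, h⟩))

theorem rightWinsFirst_add_right (j : H.RightMoves) (h : ¬ LeftWinsFirst (G + H.moveRight j)) :
    RightWinsFirst (G + H) :=
  rightWinsFirst_add_iff.mpr (.inr (.inr ⟨j, h⟩))

theorem leftWinsFirst_neg_add_iff :
    LeftWinsFirst (-G + H) ↔ IsEmpty G.RightMoves ∧ IsEmpty H.LeftMoves ∨
      (∃ j, ¬ RightWinsFirst (-G.moveRight j + H)) ∨ ∃ i, ¬ RightWinsFirst (-G + H.moveLeft i) := by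
  rw [leftWinsFirst_add_iff, isEmpty_leftMoves_neg,
    exists_leftMoves_neg (p := fun K => ¬ RightWinsFirst (K + H))]

theorem not_rightWinsFirst_neg_add_iff :
    ¬ RightWinsFirst (-G + H) ↔ (Nonempty G.LeftMoves ∨ Nonempty H.RightMoves) ∧
      (∀ i, LeftWinsFirst (-G.moveLeft i + H)) ∧ ∀ j, LeftWinsFirst (-G + H.moveRight j) := by
  rw [not_rightWinsFirst_add_iff, forall_rightMoves_neg (p := fun K => LeftWinsFirst (K + H)),
    ← not_isEmpty_iff (α := (-G).RightMoves), isEmpty_rightMoves_neg, not_isEmpty_iff]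

theorem wins_neg (G : PGame) :
    (LeftWinsFirst (-G) ↔ RightWinsFirst G) ∧ (RightWinsFirst (-G) ↔ LeftWinsFirst G) := by
  induction G with
  | mk l r L R ihL ihR =>
    rw [neg_mk, leftWinsFirst_iff, rightWinsFirst_iff, rightWinsFirst_iff, leftWinsFirst_iff]
    exact ⟨or_congr Iff.rfl (exists_congr fun j => (ihR j).2.not),
      or_congr Iff.rfl (exists_congr fun i => (ihL i).1.not)⟩

theorem leftWinsFirst_neg : LeftWinsFirst (-G) ↔ RightWinsFirst G := (wins_neg G).1

theorem rightWinsFirst_neg : RightWinsFirst (-G) ↔ LeftWinsFirst G := (wins_neg G).2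

theorem wins_add_comm (G H : PGame) :
    (LeftWinsFirst (G + H) ↔ LeftWinsFirst (H + G)) ∧
      (RightWinsFirst (G + H) ↔ RightWinsFirst (H + G)) := by
  induction G generalizing H with
  | mk l r L R ihL ihR =>
    induction H with
    | mk l' r' L' R' ihL' ihR' =>
      rw [leftWinsFirst_add_iff, leftWinsFirst_add_iff, rightWinsFirst_add_iff,
        rightWinsFirst_add_iff]
      exact ⟨or_congr and_comm ((or_congr (exists_congr fun i => (ihL i _).2.not)
          (exists_congr fun i => (ihL' i).2.not)).trans or_comm),
        or_congr and_comm ((or_congr (exists_congr fun j => (ihR j _).1.not)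
          (exists_congr fun j => (ihR' j).1.not)).trans or_comm)⟩

theorem wins_add_of_isEmpty (hl : IsEmpty X.LeftMoves) (hr : IsEmpty X.RightMoves) (G : PGame) :
    (LeftWinsFirst (G + X) ↔ LeftWinsFirst G) ∧ (RightWinsFirst (G + X) ↔ RightWinsFirst G) := by
  induction G with
  | mk l r L R ihL ihR =>
    rw [leftWinsFirst_add_iff, rightWinsFirst_add_iff, leftWinsFirst_iff (G := mk l r L R),
      rightWinsFirst_iff (G := mk l r L R)]
    simp only [hl, hr, and_true, IsEmpty.exists_iff, or_false]
    exact ⟨or_congr Iff.rfl (exists_congr fun i => (ihL i).2.not),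
      or_congr Iff.rfl (exists_congr fun j => (ihR j).1.not)⟩

/-- `IsShort` and `Dicot` unfold to `Hereditarily` of a condition on the top position. -/
def Hereditarily (P : PGame → Prop) (G : PGame) : Prop :=
  ∀ G', Follower G' G → P G'

theorem Hereditarily.self (h : Hereditarily P G) : P G :=
  h G .refl

theorem Hereditarily.of_isOption {K : PGame} (h : Hereditarily P G) (hK : IsOption K G) :
    Hereditarily P K :=
  fun K' hK' => h K' (hK'.tail hK)

theorem Hereditarily.moveLeft (h : Hereditarily P G) (i : G.LeftMoves) :
    Hereditarily P (G.moveLeft i) :=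
  h.of_isOption (.moveLeft i)

theorem Hereditarily.moveRight (h : Hereditarily P G) (j : G.RightMoves) :
    Hereditarily P (G.moveRight j) :=
  h.of_isOption (.moveRight j)

theorem hereditarily_mk {l r : Type u} {L : l → PGame} {R : r → PGame} (h : P (mk l r L R))
    (hL : ∀ i, Hereditarily P (L i)) (hR : ∀ j, Hereditarily P (R j)) :
    Hereditarily P (mk l r L R) := by
  intro K hK
  obtain rfl | ⟨K', hK, hK'⟩ := Relation.ReflTransGen.cases_tail hK
  · exact h
  · cases hK' with
    | moveLeft i => exact hL i K hK
    | moveRight j => exact hR j K hK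

theorem Hereditarily.add (hP : ∀ A B, P A → P B → P (A + B))
    (hA : Hereditarily P A) (hB : Hereditarily P B) : Hereditarily P (A + B) := by
  induction A generalizing B with
  | mk l r L R ihL ihR =>
    induction B with
    | mk l' r' L' R' ihL' ihR' =>
      refine hereditarily_mk (hP _ _ hA.self hB.self) ?_ ?_ <;> rintro (i | i)
      exacts [ihL i (hA.moveLeft i) hB, ihL' i (hB.moveLeft i), ihR i (hA.moveRight i) hB,
        ihR' i (hB.moveRight i)]

theorem Hereditarily.neg (hP : ∀ A, P A → P (-A)) (h : Hereditarily P G) :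
    Hereditarily P (-G) := by
  induction G with
  | mk l r L R ihL ihR =>
    exact hereditarily_mk (hP _ h.self) (fun j => ihR j (h.moveRight j))
      (fun i => ihL i (h.moveLeft i))

theorem Dicot.isEmpty_leftMoves_iff (h : Dicot G) : IsEmpty G.LeftMoves ↔ IsEmpty G.RightMoves :=
  Hereditarily.self h

theorem Dicot.moveLeft (h : Dicot G) (i : G.LeftMoves) : Dicot (G.moveLeft i) :=
  Hereditarily.moveLeft h i

theorem Dicot.moveRight (h : Dicot G) (j : G.RightMoves) : Dicot (G.moveRight j) :=
  Hereditarily.moveRight h j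

theorem dicot_mk {l r : Type u} {L : l → PGame} {R : r → PGame} (h : IsEmpty l ↔ IsEmpty r)
    (hL : ∀ i, Dicot (L i)) (hR : ∀ j, Dicot (R j)) : Dicot (mk l r L R) :=
  hereditarily_mk h hL hR

theorem Dicot.add (hG : Dicot G) (hH : Dicot H) : Dicot (G + H) :=
  Hereditarily.add (fun _ _ hA hB => by
    rw [isEmpty_leftMoves_add, isEmpty_rightMoves_add, hA, hB]) hG hH

theorem Dicot.neg (h : Dicot G) : Dicot (-G) :=
  Hereditarily.neg (fun _ hA => by rw [isEmpty_leftMoves_neg, isEmpty_rightMoves_neg, hA]) h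

theorem IsShort.moveLeft (h : IsShort G) (i : G.LeftMoves) : IsShort (G.moveLeft i) :=
  Hereditarily.moveLeft h i

theorem IsShort.moveRight (h : IsShort G) (j : G.RightMoves) : IsShort (G.moveRight j) :=
  Hereditarily.moveRight h j

theorem isShort_mk {l r : Type u} [Finite l] [Finite r] {L : l → PGame} {R : r → PGame}
    (hL : ∀ i, IsShort (L i)) (hR : ∀ j, IsShort (R j)) : IsShort (mk l r L R) :=
  hereditarily_mk ⟨‹_›, ‹_›⟩ hL hR

theorem IsShort.add (hG : IsShort G) (hH : IsShort H) : IsShort (G + H) :=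
  Hereditarily.add (fun A B ⟨hAl, hAr⟩ ⟨hBl, hBr⟩ => by
    cases A; cases B; exact ⟨@Finite.instSum _ _ hAl hBl, @Finite.instSum _ _ hAr hBr⟩) hG hH

theorem IsShort.neg (h : IsShort G) : IsShort (-G) :=
  Hereditarily.neg (fun A ⟨_, _⟩ => by cases A; exact ⟨‹_›, ‹_›⟩) h

theorem dicot_zero : Dicot 0 :=
  dicot_mk Iff.rfl (fun i => i.elim) (fun j => j.elim)

theorem isShort_zero : IsShort 0 :=
  isShort_mk (fun i => i.elim) (fun j => j.elim)

theorem dicot_star : Dicot star :=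
  dicot_mk Iff.rfl (fun _ => dicot_zero) (fun _ => dicot_zero)

theorem isShort_star : IsShort star :=
  isShort_mk (fun _ => isShort_zero) (fun _ => isShort_zero)

theorem MOutcome.le_refl (a : MOutcome) : a ≤ a := Or.inl rfl

theorem MOutcome.le_antisymm {a b : MOutcome} (hab : a ≤ b) (hba : b ≤ a) : a = b := by
  cases a <;> cases b <;> simp_all [LE.le]

theorem outcome_le_iff : outcome G ≤ outcome H ↔
    (LeftWinsFirst G → LeftWinsFirst H) ∧ (¬ RightWinsFirst G → ¬ RightWinsFirst H) := by
  unfold outcome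
  split_ifs <;> simp_all [LE.le]

theorem outcome_eq_iff : outcome G = outcome H ↔
    (LeftWinsFirst G ↔ LeftWinsFirst H) ∧ (RightWinsFirst G ↔ RightWinsFirst H) := by
  unfold outcome
  split_ifs <;> simp_all

theorem outcome_neg_le_neg_iff : outcome (-G) ≤ outcome (-H) ↔ outcome H ≤ outcome G := by
  rw [outcome_le_iff, outcome_le_iff, leftWinsFirst_neg, leftWinsFirst_neg, rightWinsFirst_neg,
    rightWinsFirst_neg, and_comm, not_imp_not, not_imp_not]

theorem outcome_zero_add (G : PGame) : outcome (0 + G) = outcome G := by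
  rw [outcome_eq_iff, (wins_add_comm 0 G).1, (wins_add_comm 0 G).2]
  exact wins_add_of_isEmpty inferInstance inferInstance G

theorem Deq.symm (h : Deq G H) : Deq H G :=
  fun X hXs hXd => (h X hXs hXd).symm

theorem Deq.dge (h : Deq G H) : Dge G H :=
  fun X hXs hXd => h X hXs hXd ▸ MOutcome.le_refl _

theorem Dge.antisymm (hGH : Dge G H) (hHG : Dge H G) : Deq G H :=
  fun X hXs hXd => MOutcome.le_antisymm (hHG X hXs hXd) (hGH X hXs hXd)

theorem Dge.neg (h : Dge G H) : Dge (-H) (-G) := by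
  intro X hXs hXd
  have := h (-X) hXs.neg hXd.neg
  rwa [← outcome_neg_le_neg_iff, PGame.neg_add, PGame.neg_add, neg_neg] at this

theorem adjoint_of_isEmpty {l r : Type u} {L : l → PGame} {R : r → PGame}
    (hl : IsEmpty l) (hr : IsEmpty r) : adjoint (mk l r L R) = star := by
  rw [adjoint, if_pos ⟨hl, hr⟩]

theorem adjoint_of_nonempty {l r : Type u} {L : l → PGame} {R : r → PGame}
    (hl : Nonempty l) (hr : Nonempty r) :
    adjoint (mk l r L R) = mk r l (fun j => adjoint (R j)) (fun i => adjoint (L i)) := by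
  rw [← not_isEmpty_iff] at hl hr
  rw [adjoint, if_neg (by tauto), if_neg hl, if_neg hr]

theorem Dicot.adjoint (h : Dicot G) : Dicot (adjoint G) := by
  induction G with
  | mk l r L R ihL ihR =>
    by_cases hl : IsEmpty l
    · have hr : IsEmpty r := h.isEmpty_leftMoves_iff.mp hl
      rw [adjoint_of_isEmpty hl hr]
      exact dicot_star
    · have hr : ¬ IsEmpty r := mt h.isEmpty_leftMoves_iff.mpr hl
      rw [adjoint_of_nonempty (not_isEmpty_iff.mp hl) (not_isEmpty_iff.mp hr)]
      exact dicot_mk (iff_of_false hr hl) (fun j => ihR j (h.moveRight j))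
        (fun i => ihL i (h.moveLeft i))

theorem IsShort.adjoint (h : IsShort G) : IsShort (adjoint G) := by
  induction G with
  | mk l r L R ihL ihR =>
    have : Finite l := (Hereditarily.self h).1
    have : Finite r := (Hereditarily.self h).2
    rw [MisereDicot.adjoint]
    split_ifs
    · exact isShort_star
    · exact isShort_mk (fun j => ihR j (h.moveRight j)) (fun _ => isShort_zero)
    · exact isShort_mk (fun _ => isShort_zero) (fun i => ihL i (h.moveLeft i))
    · exact isShort_mk (fun j => ihR j (h.moveRight j)) (fun i => ihL i (h.moveLeft i))

/-- Each move in `G + G°` is answered by its mirror image in the other component. -/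
theorem wins_add_adjoint (h : Dicot G) :
    ¬ LeftWinsFirst (G + adjoint G) ∧ ¬ RightWinsFirst (G + adjoint G) := by
  induction G with
  | mk l r L R ihL ihR =>
    rw [not_leftWinsFirst_add_iff, not_rightWinsFirst_add_iff]
    by_cases hl : IsEmpty l
    · have hr : IsEmpty r := h.isEmpty_leftMoves_iff.mp hl
      rw [adjoint_of_isEmpty hl hr]
      refine ⟨⟨.inr ⟨.unit⟩, hl.elim, fun _ => ?_⟩, ⟨.inr ⟨.unit⟩, hr.elim, fun _ => ?_⟩⟩
      · exact rightWinsFirst_of_isEmpty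
          (isEmpty_rightMoves_add.mpr ⟨hr, inferInstanceAs (IsEmpty (RightMoves 0))⟩)
      · exact leftWinsFirst_of_isEmpty
          (isEmpty_leftMoves_add.mpr ⟨hl, inferInstanceAs (IsEmpty (LeftMoves 0))⟩)
    · have hr : ¬ IsEmpty r := mt h.isEmpty_leftMoves_iff.mpr hl
      rw [not_isEmpty_iff] at hl hr
      rw [adjoint_of_nonempty hl hr]
      exact ⟨⟨.inl hl, fun i => rightWinsFirst_add_right i (ihL i (h.moveLeft i)).1,
          fun j => rightWinsFirst_add_left j (ihR j (h.moveRight j)).1⟩,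
        ⟨.inl hr, fun j => leftWinsFirst_add_right j (ihR j (h.moveRight j)).2,
          fun i => leftWinsFirst_add_left i (ihL i (h.moveLeft i)).2⟩⟩

theorem not_leftWinsFirst_star : ¬ LeftWinsFirst star :=
  not_leftWinsFirst_iff.mpr
    ⟨⟨.unit⟩, fun _ => rightWinsFirst_of_isEmpty (inferInstanceAs (IsEmpty (RightMoves 0)))⟩

theorem dge_zero_iff : Dge 0 W ↔ ∀ X, IsShort X → Dicot X →
    (LeftWinsFirst (W + X) → LeftWinsFirst X) ∧
      (¬ RightWinsFirst (W + X) → ¬ RightWinsFirst X) := by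
  simp only [Dge, outcome_zero_add, outcome_le_iff]

theorem rightWinsFirst_of_dge_zero (h : Dge 0 W) : RightWinsFirst W := by
  have hW0 := (dge_zero_iff.mp h 0 isShort_zero dicot_zero).2
  rw [← (wins_add_of_isEmpty (X := 0) inferInstance inferInstance W).2]
  by_contra hW
  exact hW0 hW (rightWinsFirst_of_isEmpty inferInstance)

theorem not_dge_zero_of_isEmpty_moveLeft (i : W.LeftMoves)
    (hl : IsEmpty (W.moveLeft i).LeftMoves) (hr : IsEmpty (W.moveLeft i).RightMoves) :
    ¬ Dge 0 W := by
  have hW : LeftWinsFirst (W + star) := leftWinsFirst_add_left i <|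
    not_rightWinsFirst_add_iff.mpr ⟨.inr ⟨.unit⟩, hr.elim, fun _ => leftWinsFirst_of_isEmpty
      (isEmpty_leftMoves_add.mpr ⟨hl, inferInstanceAs (IsEmpty (LeftMoves 0))⟩)⟩
  exact fun h => not_leftWinsFirst_star ((dge_zero_iff.mp h star isShort_star dicot_star).1 hW)

theorem not_rightWinsFirst_add_mk {Y : PGame} [Nonempty Y.RightMoves] {r : Type u}
    {K : Y.RightMoves → PGame} {R : r → PGame} (hK : ∀ k, ¬ RightWinsFirst (Y.moveRight k + K k))
    (hR : ∀ j, LeftWinsFirst (Y + R j)) : ¬ RightWinsFirst (Y + mk Y.RightMoves r K R) :=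
  not_rightWinsFirst_add_iff.mpr ⟨.inl ‹_›, fun k => leftWinsFirst_add_right k (hK k), hR⟩

theorem exists_test_of_not_dge_zero (hs : IsShort W) (hd : Dicot W) [Nonempty W.RightMoves]
    (h : ¬ Dge 0 W) :
    ∃ C, IsShort C ∧ Dicot C ∧ RightWinsFirst C ∧ ¬ RightWinsFirst (W + C) := by
  simp only [dge_zero_iff, not_forall, not_and_or] at h
  obtain ⟨X, hXs, hXd, ⟨hWX, hX⟩ | ⟨hWX, hX⟩⟩ := h
  · -- `X` separates `W` from `0` with Left to move; `{W^R° | X}` does so with Right to move.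
    have : Finite W.RightMoves := (Hereditarily.self hs).2
    refine ⟨mk W.RightMoves PUnit (fun k => adjoint (W.moveRight k)) (fun _ => X),
      isShort_mk (fun k => (hs.moveRight k).adjoint) (fun _ => hXs),
      dicot_mk (iff_of_false (not_isEmpty_of_nonempty _) (not_isEmpty_of_nonempty _))
        (fun k => (hd.moveRight k).adjoint) (fun _ => hXd),
      rightWinsFirst_iff.mpr (.inr ⟨.unit, hX⟩), ?_⟩
    exact not_rightWinsFirst_add_mk (fun k => (wins_add_adjoint (hd.moveRight k)).2) fun _ => hWX
  · exact ⟨X, hXs, hXd, not_not.mp hX, hWX⟩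

def RecLeZero (W : PGame) : Prop :=
  RightWinsFirst W ∧ ∀ i : W.LeftMoves, ∃ j, RecLeZero ((W.moveLeft i).moveRight j)
termination_by W.birthday
decreasing_by exact birthday_moveRight_moveLeft_lt i j

theorem recLeZero_iff : RecLeZero W ↔
    RightWinsFirst W ∧ ∀ i : W.LeftMoves, ∃ j, RecLeZero ((W.moveLeft i).moveRight j) := by
  rw [RecLeZero]

theorem recLeZero_of_isEmpty (hl : IsEmpty W.LeftMoves) (hr : IsEmpty W.RightMoves) :
    RecLeZero W :=
  recLeZero_iff.mpr ⟨rightWinsFirst_of_isEmpty hr, hl.elim⟩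

/-- The witness is `T = {C_k | {A° | A°}}` for `A = W^L_i`: Left opens with `A` in `W + T`,
answers `A^R_k` with `C_k` and `{A° | A°}` with `A°`, while alone in `T` she loses. -/
theorem not_dge_zero_of_moveLeft (i : W.LeftMoves) (hs : IsShort (W.moveLeft i))
    (hd : Dicot (W.moveLeft i)) [Nonempty (W.moveLeft i).RightMoves]
    (C : (W.moveLeft i).RightMoves → PGame) (hCs : ∀ k, IsShort (C k))
    (hCd : ∀ k, Dicot (C k)) (hCr : ∀ k, RightWinsFirst (C k))
    (hC : ∀ k, ¬ RightWinsFirst ((W.moveLeft i).moveRight k + C k)) : ¬ Dge 0 W := by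
  have : Finite (W.moveLeft i).RightMoves := (Hereditarily.self hs).2
  let E := mk PUnit PUnit (fun _ => adjoint (W.moveLeft i)) (fun _ => adjoint (W.moveLeft i))
  let T := mk (W.moveLeft i).RightMoves PUnit C (fun _ => E)
  have hTs : IsShort T :=
    isShort_mk hCs fun _ => isShort_mk (fun _ => hs.adjoint) (fun _ => hs.adjoint)
  have hTd : Dicot T :=
    dicot_mk (iff_of_false (not_isEmpty_of_nonempty _) (not_isEmpty_of_nonempty _)) hCd
      fun _ => dicot_mk Iff.rfl (fun _ => hd.adjoint) (fun _ => hd.adjoint)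
  have hWT : LeftWinsFirst (W + T) := leftWinsFirst_add_left i <|
    not_rightWinsFirst_add_mk hC fun _ => leftWinsFirst_add_right .unit (wins_add_adjoint hd).2
  have hT : ¬ LeftWinsFirst T := not_leftWinsFirst_iff.mpr ⟨‹_›, hCr⟩
  exact fun h => hT ((dge_zero_iff.mp h T hTs hTd).1 hWT)

theorem recLeZero_of_dge_zero {W : PGame} (hs : IsShort W) (hd : Dicot W) (h : Dge 0 W) :
    RecLeZero W := by
  refine recLeZero_iff.mpr ⟨rightWinsFirst_of_dge_zero h, fun i => ?_⟩
  by_contra! hA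
  have hAd := hd.moveLeft i
  obtain hAl | hAl := isEmpty_or_nonempty (W.moveLeft i).LeftMoves
  · exact not_dge_zero_of_isEmpty_moveLeft i hAl (hAd.isEmpty_leftMoves_iff.mp hAl) h
  have : Nonempty (W.moveLeft i).RightMoves := by
    rwa [← not_isEmpty_iff, ← hAd.isEmpty_leftMoves_iff, not_isEmpty_iff]
  have htest (k : (W.moveLeft i).RightMoves) : ∃ C, IsShort C ∧ Dicot C ∧ RightWinsFirst C ∧
      ¬ RightWinsFirst ((W.moveLeft i).moveRight k + C) := by
    have hVs := (hs.moveLeft i).moveRight k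
    have hVd := hAd.moveRight k
    have : Nonempty ((W.moveLeft i).moveRight k).RightMoves := by
      by_contra! hVr
      exact hA k (recLeZero_of_isEmpty (hVd.isEmpty_leftMoves_iff.mpr hVr) hVr)
    exact exists_test_of_not_dge_zero hVs hVd fun hV => hA k (recLeZero_of_dge_zero hVs hVd hV)
  choose C hCs hCd hCr hC using htest
  exact not_dge_zero_of_moveLeft i (hs.moveLeft i) hAd C hCs hCd hCr hC h
termination_by W.birthday
decreasing_by exact birthday_moveRight_moveLeft_lt i k

theorem RecLeZero.reverse_moveLeft_left (h : RecLeZero (A + B)) (i : A.LeftMoves) :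
    (∃ k, RecLeZero ((A.moveLeft i).moveRight k + B)) ∨
      ∃ k, RecLeZero (A.moveLeft i + B.moveRight k) :=
  exists_rightMoves_add.mp
    (((forall_leftMoves_add (p := fun K => ∃ k, RecLeZero (K.moveRight k))).mp
      (recLeZero_iff.mp h).2).1 i)

theorem RecLeZero.reverse_moveLeft_right (h : RecLeZero (A + B)) (i : B.LeftMoves) :
    (∃ k, RecLeZero (A.moveRight k + B.moveLeft i)) ∨
      ∃ k, RecLeZero (A + (B.moveLeft i).moveRight k) :=
  exists_rightMoves_add.mp
    (((forall_leftMoves_add (p := fun K => ∃ k, RecLeZero (K.moveRight k))).mp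
      (recLeZero_iff.mp h).2).2 i)

mutual

theorem leftWinsFirst_neg_add_of_recLeZero {A B X : PGame} (hA : Dicot A) (hB : Dicot B)
    (hX : Dicot X) (hAB : RecLeZero (A + B)) (h : LeftWinsFirst (B + X)) :
    LeftWinsFirst (-A + X) := by
  rcases leftWinsFirst_add_iff.mp h with ⟨hBl, hXl⟩ | ⟨i, hi⟩ | ⟨i, hi⟩
  · have hXr := hX.isEmpty_leftMoves_iff.mp hXl
    have hA' := (wins_add_of_isEmpty hBl (hB.isEmpty_leftMoves_iff.mp hBl) A).2.mp
      (recLeZero_iff.mp hAB).1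
    obtain hAr | ⟨k, hk⟩ := rightWinsFirst_iff.mp hA'
    · exact leftWinsFirst_neg_add_iff.mpr (.inl ⟨hAr, hXl⟩)
    · refine leftWinsFirst_neg_add_iff.mpr (.inr (.inl ⟨k, ?_⟩))
      rwa [(wins_add_of_isEmpty hXl hXr _).2, rightWinsFirst_neg]
  · rcases hAB.reverse_moveLeft_right i with ⟨k, hk⟩ | ⟨k, hk⟩
    · exact leftWinsFirst_neg_add_iff.mpr (.inr (.inl ⟨k,
        not_rightWinsFirst_neg_add_of_recLeZero (hA.moveRight k) (hB.moveLeft i) hX hk hi⟩))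
    · exact leftWinsFirst_neg_add_of_recLeZero hA ((hB.moveLeft i).moveRight k) hX hk
        ((not_rightWinsFirst_add_iff.mp hi).2.1 k)
  · exact leftWinsFirst_add_right i
      (not_rightWinsFirst_neg_add_of_recLeZero hA hB (hX.moveLeft i) hAB hi)
termination_by (A.birthday, B.birthday, X.birthday)
decreasing_by
  · exact .left _ _ (birthday_moveRight_lt _)
  · exact .right _ (.left _ _ (birthday_moveRight_moveLeft_lt _ _))
  · exact .right _ (.right _ (birthday_moveLeft_lt _))

theorem not_rightWinsFirst_neg_add_of_recLeZero {A B X : PGame} (hA : Dicot A) (hB : Dicot B)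
    (hX : Dicot X) (hAB : RecLeZero (A + B)) (h : ¬ RightWinsFirst (B + X)) :
    ¬ RightWinsFirst (-A + X) := by
  obtain ⟨-, hBR, hXR⟩ := not_rightWinsFirst_add_iff.mp h
  refine not_rightWinsFirst_neg_add_iff.mpr ⟨?_, fun i => ?_, fun j => ?_⟩
  · by_contra! ⟨hAl, hXr⟩
    have hB' := (wins_add_of_isEmpty hAl (hA.isEmpty_leftMoves_iff.mp hAl) B).2.mp
      ((wins_add_comm A B).2.mp (recLeZero_iff.mp hAB).1)
    exact h ((wins_add_of_isEmpty (hX.isEmpty_leftMoves_iff.mpr hXr) hXr B).2.mpr hB')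
  · rcases hAB.reverse_moveLeft_left i with ⟨k, hk⟩ | ⟨k, hk⟩
    · exact leftWinsFirst_neg_add_iff.mpr (.inr (.inl ⟨k,
        not_rightWinsFirst_neg_add_of_recLeZero ((hA.moveLeft i).moveRight k) hB hX hk h⟩))
    · exact leftWinsFirst_neg_add_of_recLeZero (hA.moveLeft i) (hB.moveRight k) hX hk (hBR k)
  · exact leftWinsFirst_neg_add_of_recLeZero hA hB (hX.moveRight j) hAB (hXR j)
termination_by (A.birthday, B.birthday, X.birthday)
decreasing_by
  · exact .left _ _ (birthday_moveRight_moveLeft_lt _ _)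
  · exact .left _ _ (birthday_moveLeft_lt _)
  · exact .right _ (.right _ (birthday_moveRight_lt _))

end

theorem RecLeZero.dge_neg (hA : Dicot A) (hB : Dicot B) (h : RecLeZero (A + B)) : Dge (-A) B :=
  fun _ _ hX => outcome_le_iff.mpr ⟨leftWinsFirst_neg_add_of_recLeZero hA hB hX h,
    not_rightWinsFirst_neg_add_of_recLeZero hA hB hX h⟩

theorem dge_neg_of_dge_zero_add (hAs : IsShort A) (hAd : Dicot A) (hBs : IsShort B)
    (hBd : Dicot B) (h : Dge 0 (A + B)) : Dge (-A) B :=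
  (recLeZero_of_dge_zero (hAs.add hBs) (hAd.add hBd) h).dge_neg hAd hBd

/-- Conjugate property: for short dicots, if `G + H = 0` (mod `D⁻`)
then `H = −G` (mod `D⁻`). -/
theorem stmt13 (G H : PGame) (hGs : IsShort G) (hGd : Dicot G)
    (hHs : IsShort H) (hHd : Dicot H) (h : Deq (G + H) 0) : Deq H (-G) := by
  have hle : Dge (-G) H := dge_neg_of_dge_zero_add hGs hGd hHs hHd h.symm.dge
  have hneg : Dge 0 (-G + -H) := by
    simpa only [PGame.neg_zero, PGame.neg_add] using h.dge.neg
  have hge : Dge G (-H) := by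
    simpa only [neg_neg] using dge_neg_of_dge_zero_add hGs.neg hGd.neg hHs.neg hHd.neg hneg
  exact Dge.antisymm (by simpa only [neg_neg] using hge.neg) hle

end MisereDicot
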